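/- Let f be a first-order monotone boolean function of arity k such that π₁(tr f) has no bivalued linearly coherent subset (i.e. bcc(f) = ∞). Then f is invariant under P^m_{m,m} for every m ≥ 0. -/

import Mathlib

/-!
Suppose the columns of an input lie in `P^m_{m,m}` and `f` is defined on every column. Below
each column choose a minimal point of the trace of `f`. These points form a linearly coherent
set, since a row of the input that never takes the value `⊥` is constant. On a linearly
coherent subset of the trace, `f` is constant when `bcc f = ∞`. Two compatible points have a
common upper bound, so they get the same value by monotonicity. Two incompatible points
conflict at some coordinate where a third point of the set is `⊥`. If their values differed,
the three points would form a bivalued linearly coherent set.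
-/

/-- The flat boolean domain: `⊥`, `tt`, `ff`. -/
abbrev Bb : Type := WithBot Bool

/-- The flat (domain) order on `Bb`: `⊥` below everything, `tt` and `ff` incomparable. -/
def bLE (a b : Bb) : Prop := a = ⊥ ∨ a = b

/-- Pointwise flat order on tuples. -/
def tupLE {k : ℕ} (x y : Fin k → Bb) : Prop := ∀ i, bLE (x i) (y i)

/-- Strict pointwise flat order on tuples. -/
def tupLT {k : ℕ} (x y : Fin k → Bb) : Prop := tupLE x y ∧ x ≠ y

/-- A first-order boolean function is monotone for the flat order. -/
def FlatMono {k : ℕ} (f : (Fin k → Bb) → Bb) : Prop :=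
  ∀ x y, tupLE x y → bLE (f x) (f y)

/-- The presequentiality relation `P^n_{A,B}` (indices `0,…,n-1`). -/
def Preseq (n : ℕ) (A B : Finset ℕ) : Set (Fin n → Bb) :=
  {d | (∃ i : Fin n, (i : ℕ) ∈ A ∧ d i = ⊥) ∨
       (∀ i j : Fin n, (i : ℕ) ∈ B → (j : ℕ) ∈ B → d i = d j)}

/-- `P^n_{m,m'}`: the presequentiality relation on initial segments. -/
def PreseqSeg (n m m' : ℕ) : Set (Fin n → Bb) :=
  Preseq n (Finset.range m) (Finset.range m')

/-- `f` (arity `k`) is invariant under an `n`-ary relation `R`. -/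
def Invariant {k n : ℕ} (f : (Fin k → Bb) → Bb) (R : Set (Fin n → Bb)) : Prop :=
  ∀ x : Fin k → Fin n → Bb, (∀ m, x m ∈ R) →
    (fun i => f (fun m => x m i)) ∈ R

/-- `π₁(tr f)`: the set of minimal points where `f` is defined. -/
def traceDom {k : ℕ} (f : (Fin k → Bb) → Bb) : Set (Fin k → Bb) :=
  {v | f v ≠ ⊥ ∧ ∀ v', tupLT v' v → f v' = ⊥}

/-- Linear coherence of a set of tuples. -/
def LinCoherent {k : ℕ} (S : Set (Fin k → Bb)) : Prop :=
  ∀ j : Fin k, (∀ v ∈ S, v j ≠ ⊥) → ∀ v ∈ S, ∀ w ∈ S, v j = w j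

/-- The coefficient of coherence `cc(f) ∈ ℕ∞`. -/
noncomputable def cc {k : ℕ} (f : (Fin k → Bb) → Bb) : ℕ∞ :=
  sInf {c : ℕ∞ | ∃ S : Finset (Fin k → Bb),
    ↑S ⊆ traceDom f ∧ 2 ≤ S.card ∧ LinCoherent (↑S : Set (Fin k → Bb)) ∧ c = (S.card : ℕ∞)}

/-- The bivalued coefficient of coherence `bcc(f) ∈ ℕ∞`. -/
noncomputable def bcc {k : ℕ} (f : (Fin k → Bb) → Bb) : ℕ∞ :=
  sInf {c : ℕ∞ | ∃ S : Finset (Fin k → Bb),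
    ↑S ⊆ traceDom f ∧ 3 ≤ S.card ∧ LinCoherent (↑S : Set (Fin k → Bb)) ∧
    (∃ v ∈ S, f v = ((true : Bool) : Bb)) ∧ (∃ v ∈ S, f v = ((false : Bool) : Bb)) ∧
    c = (S.card : ℕ∞)}

/-- M-sequentiality, by induction on the arity. -/
def MSeq : ∀ {k : ℕ}, ((Fin k → Bb) → Bb) → Prop
  | 0, f => ∃ b, ∀ x, f x = b
  | (k+1), f => (∃ b, ∀ x, f x = b) ∨
      ∃ i : Fin (k+1), (∀ x, x i = ⊥ → f x = ⊥) ∧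
        ∀ c : Bool, MSeq (fun x : Fin k → Bb => f (i.insertNth (c : Bb) x))

lemma bLE.eq_of_ne_bot {a b : Bb} (h : bLE a b) (ha : a ≠ ⊥) : a = b :=
  h.resolve_left ha

lemma tupLE_refl {k : ℕ} (x : Fin k → Bb) : tupLE x x := fun _ => Or.inr rfl

lemma tupLE_trans {k : ℕ} {x y z : Fin k → Bb} (hxy : tupLE x y) (hyz : tupLE y z) :
    tupLE x z := fun i => (hxy i).elim Or.inl fun h => h ▸ hyz i

lemma tupLE_antisymm {k : ℕ} {x y : Fin k → Bb} (hxy : tupLE x y) (hyx : tupLE y x) :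
    x = y := by
  funext i
  rcases hxy i with h | h
  · rcases hyx i with h' | h' <;> simp [h, h']
  · exact h

lemma tupLT_wellFounded (k : ℕ) : WellFounded (@tupLT k) :=
  haveI : IsTrans _ (@tupLT k) := ⟨fun _ _ _ hxy hyz =>
    ⟨tupLE_trans hxy.1 hyz.1, fun h => hxy.2 (tupLE_antisymm hxy.1 (h ▸ hyz.1))⟩⟩
  haveI : Std.Irrefl (@tupLT k) := ⟨fun _ h => h.2 rfl⟩
  Finite.wellFounded_of_trans_of_irrefl _

lemma exists_mem_traceDom_le {k : ℕ} {f : (Fin k → Bb) → Bb} (hf : FlatMono f)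
    {c : Fin k → Bb} (hc : f c ≠ ⊥) :
    ∃ v, tupLE v c ∧ v ∈ traceDom f ∧ f v = f c := by
  obtain ⟨v, ⟨hvc, hv⟩, hmin⟩ :=
    (tupLT_wellFounded k).has_min {v | tupLE v c ∧ f v ≠ ⊥} ⟨c, tupLE_refl c, hc⟩
  refine ⟨v, hvc, ⟨hv, fun v' hlt => ?_⟩, (hf v c hvc).eq_of_ne_bot hv⟩
  by_contra hv'
  exact hmin v' ⟨tupLE_trans hlt.1 hvc, hv'⟩ hlt

def tupJoin {k : ℕ} (v w : Fin k → Bb) : Fin k → Bb := fun l => if v l = ⊥ then w l else v l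

lemma tupLE_tupJoin_left {k : ℕ} (v w : Fin k → Bb) : tupLE v (tupJoin v w) := by
  intro l
  by_cases h : v l = ⊥
  · exact Or.inl h
  · exact Or.inr (if_neg h).symm

lemma tupLE_tupJoin_right {k : ℕ} {v w : Fin k → Bb}
    (hvw : ∀ l, v l ≠ ⊥ → w l ≠ ⊥ → v l = w l) : tupLE w (tupJoin v w) := by
  intro l
  by_cases hw : w l = ⊥
  · exact Or.inl hw
  · by_cases hv : v l = ⊥
    · exact Or.inr (if_pos hv).symm
    · exact Or.inr ((if_neg hv).trans (hvw l hv hw)).symm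

lemma FlatMono.eq_of_compatible {k : ℕ} {f : (Fin k → Bb) → Bb} (hf : FlatMono f)
    {v w : Fin k → Bb} (hv : f v ≠ ⊥) (hw : f w ≠ ⊥)
    (hvw : ∀ l, v l ≠ ⊥ → w l ≠ ⊥ → v l = w l) : f v = f w :=
  ((hf _ _ (tupLE_tupJoin_left v w)).eq_of_ne_bot hv).trans
    ((hf _ _ (tupLE_tupJoin_right hvw)).eq_of_ne_bot hw).symm

lemma bcc_le_card {k : ℕ} {f : (Fin k → Bb) → Bb} {S : Finset (Fin k → Bb)}
    (hS : ↑S ⊆ traceDom f) (hcard : 3 ≤ S.card)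
    (hcoh : LinCoherent (↑S : Set (Fin k → Bb)))
    {v w : Fin k → Bb} (hv : v ∈ S) (hw : w ∈ S) (hvtt : f v = ((true : Bool) : Bb))
    (hwff : f w = ((false : Bool) : Bb)) : bcc f ≤ S.card :=
  sInf_le ⟨S, hS, hcard, hcoh, ⟨v, hv, hvtt⟩, ⟨w, hw, hwff⟩, rfl⟩

lemma FlatMono.eq_of_mem_linCoherent {k : ℕ} {f : (Fin k → Bb) → Bb} (hf : FlatMono f)
    (hb : bcc f = ⊤) {S : Finset (Fin k → Bb)} (hS : ↑S ⊆ traceDom f)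
    (hcoh : LinCoherent (↑S : Set (Fin k → Bb))) {v w : Fin k → Bb} (hv : v ∈ S)
    (hw : w ∈ S) : f v = f w := by
  have hdef : ∀ u ∈ S, f u ≠ ⊥ := fun u hu => (hS hu).1
  by_contra hne
  by_cases hvw : ∀ l, v l ≠ ⊥ → w l ≠ ⊥ → v l = w l
  · exact hne (hf.eq_of_compatible (hdef v hv) (hdef w hw) hvw)
  push Not at hvw
  obtain ⟨l, hvl, hwl, hvwl⟩ := hvw
  obtain ⟨u, hu, hul⟩ : ∃ u ∈ S, u l = ⊥ := by
    by_contra! hall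
    exact hvwl (hcoh l hall v hv w hw)
  have hcard : 3 ≤ S.card := by
    have hvw_ne : v ≠ w := fun h => hvwl (h ▸ rfl)
    have hvu : v ≠ u := fun h => hvl (h ▸ hul)
    have hwu : w ≠ u := fun h => hwl (h ▸ hul)
    calc 3 = ({v, w, u} : Finset _).card := by
          rw [Finset.card_insert_of_notMem (by simp [hvw_ne, hvu]),
            Finset.card_insert_of_notMem (by simp [hwu]), Finset.card_singleton]
      _ ≤ S.card := Finset.card_le_card (by simp [Finset.insert_subset_iff, hv, hw, hu])
  obtain ⟨b, hvb⟩ := WithBot.ne_bot_iff_exists.mp (hdef v hv)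
  obtain ⟨b', hwb⟩ := WithBot.ne_bot_iff_exists.mp (hdef w hw)
  have hle : bcc f ≤ S.card := by
    cases b <;> cases b'
    all_goals first
      | exact absurd (hvb.symm.trans hwb) hne
      | exact bcc_le_card hS hcard hcoh hw hv hwb.symm hvb.symm
      | exact bcc_le_card hS hcard hcoh hv hw hvb.symm hwb.symm
  exact ENat.natCast_ne_top _ (top_le_iff.mp (hb ▸ hle))

lemma linCoherent_range_of_le_preseqSeg {k m : ℕ} {x : Fin k → Fin m → Bb}
    (hx : ∀ l, x l ∈ PreseqSeg m m m) {v : Fin m → Fin k → Bb}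
    (hv : ∀ a, tupLE (v a) (fun l => x l a)) :
    LinCoherent (↑(Finset.univ.image v) : Set (Fin k → Bb)) := by
  simp only [LinCoherent, Finset.coe_image, Finset.coe_univ, Set.image_univ,
    Set.forall_mem_range]
  intro l hdef a b
  have hval : ∀ a, v a l = x l a := fun a => (hv a l).eq_of_ne_bot (hdef a)
  rcases hx l with ⟨i, -, hi⟩ | hconst
  · exact absurd ((hval i).trans hi) (hdef i)
  · rw [hval, hval]
    exact hconst a b (Finset.mem_range.mpr a.isLt) (Finset.mem_range.mpr b.isLt)

/-- if `bcc f = ∞`, then `f` is invariant under `P^m_{m,m}` for every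
`m ≥ 0`. -/
theorem stmt_12 {k : ℕ} (f : (Fin k → Bb) → Bb) (hf : FlatMono f)
    (hb : bcc f = ⊤) :
    ∀ m : ℕ, Invariant f (PreseqSeg m m m) := by
  intro m x hx
  by_cases hbot : ∃ i : Fin m, f (fun l => x l i) = ⊥
  · obtain ⟨i, hi⟩ := hbot
    exact Or.inl ⟨i, Finset.mem_range.mpr i.isLt, hi⟩
  push Not at hbot
  choose v hvx hvtr hvf using fun a => exists_mem_traceDom_le hf (hbot a)
  have hS : ↑(Finset.univ.image v) ⊆ traceDom f := by
    simpa [Set.range_subset_iff] using hvtr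
  refine Or.inr fun i j _ _ => ?_
  change f (fun l => x l i) = f (fun l => x l j)
  rw [← hvf i, ← hvf j]
  exact hf.eq_of_mem_linCoherent hb hS (linCoherent_range_of_le_preseqSeg hx hvx)
    (Finset.mem_image_of_mem v (Finset.mem_univ _)) (Finset.mem_image_of_mem v (Finset.mem_univ _))
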